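/- Let ω be a smooth p-form on ℝ⁴, and consider the reference frame given by Γ = e₀ and θ = dx⁰ (the functional θ(v) = v₀), with projector P(v) = v − θ(v)e₀. Define the transversal component ω_⊥ by ω_⊥(x)(v₁, …, v_p) = ω(x)(P(v₁), …, P(v_p)), the transversal differential d_⊥η of a smooth form η by (d_⊥η)(x)(v₀, …, v_q) = dη(x)(P(v₀), …, P(v_q)), the interior product (i_Γω)(x)(v₁, …, v_{p−1}) = ω(x)(e₀, v₁, …, v_{p−1}), and the Lie derivative L_Γω_⊥ = ∂₀(ω_⊥) (the partial derivative of ω_⊥ in the direction e₀). Then the exterior derivative decomposes as dω = θ ∧ (L_Γ ω_⊥ − d_⊥ i_Γ ω) + d_⊥ ω_⊥, where θ ∧ η denotes the wedge (θ ∧ η)(v₀, …, v_p) = Σᵢ (−1)ⁱ θ(vᵢ) η(v₀, …, v̂ᵢ, …, v_p). -/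

import Mathlib

noncomputable section

/-- ℝ⁴. -/
abbrev V4 : Type := Fin 4 → ℝ

/-- The standard basis e₀, e₁, e₂, e₃ of ℝ⁴. -/
def e (i : Fin 4) : V4 := Pi.single i 1

/-- The projector P(v) = v − θ(v) e₀ of the frame Γ = e₀, θ = dx⁰. -/
def P (u : V4) : V4 := u - u 0 • e 0

/-- Exterior derivative of a smooth p-form ω (given by its values
ω x (v₁, …, v_p) as a function): (dω)(x)(v₀, …, v_p)
= Σᵢ (−1)ⁱ (Dω(x) vᵢ)(v₀, …, v̂ᵢ, …, v_p), where Dω(x) is the Fréchet derivative. -/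
def extD {E : Type*} [NormedAddCommGroup E] [NormedSpace ℝ E] {p : ℕ}
    (η : E → (Fin p → E) → ℝ) (x : E) (v : Fin (p + 1) → E) : ℝ :=
  ∑ i : Fin (p + 1),
    (-1 : ℝ) ^ (i : ℕ) * fderiv ℝ (fun y => η y (fun j => v (i.succAbove j))) x (v i)

namespace ExtFrameAux

lemma val_sA {n : ℕ} (i : Fin (n+1)) (j : Fin n) :
    (i.succAbove j : ℕ) = if (j:ℕ) < (i:ℕ) then (j:ℕ) else (j:ℕ)+1 := by
  unfold Fin.succAbove
  split_ifs with h h2 <;> simp_all [Fin.lt_def]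

lemma val_pA {n : ℕ} (j : Fin n) (i : Fin (n+1)) :
    (j.predAbove i : ℕ) = if (j:ℕ) < (i:ℕ) then (i:ℕ) - 1 else (i:ℕ) := by
  rcases Nat.lt_or_ge (j:ℕ) (i:ℕ) with h | h
  · rw [Fin.predAbove_of_castSucc_lt _ _ (by simpa [Fin.lt_def] using h), Fin.coe_pred,
      if_pos h]
  · rw [Fin.predAbove_of_le_castSucc _ _ (by simpa [Fin.le_def] using h), Fin.coe_castPred,
      if_neg (by omega)]

lemma F1 {n : ℕ} (i : Fin (n+2)) (j : Fin (n+1)) :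
    (i.succAbove j).succAbove (j.predAbove i) = i := by
  have hj := j.is_lt; have hi := i.is_lt
  apply Fin.ext
  simp only [val_sA, val_pA]
  split_ifs <;> omega

lemma F2 {n : ℕ} (i : Fin (n+2)) (j : Fin (n+1)) :
    (j.predAbove i).predAbove (i.succAbove j) = j := by
  have hj := j.is_lt; have hi := i.is_lt
  apply Fin.ext
  simp only [val_sA, val_pA]
  split_ifs <;> omega

lemma F3 {n : ℕ} (i : Fin (n+2)) (j : Fin (n+1)) (l : Fin n) :
    i.succAbove (j.succAbove l) = (i.succAbove j).succAbove ((j.predAbove i).succAbove l) := by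
  have hj := j.is_lt; have hi := i.is_lt; have hl := l.is_lt
  apply Fin.ext
  simp only [val_sA, val_pA]
  split_ifs <;> omega

lemma F4 {n : ℕ} (i : Fin (n+2)) (j : Fin (n+1)) :
    (-1:ℝ) ^ (((i.succAbove j):ℕ) + ((j.predAbove i):ℕ)) = -(-1:ℝ) ^ ((i:ℕ) + (j:ℕ)) := by
  have hj := j.is_lt; have hi := i.is_lt
  have h : ((i:ℕ)+(j:ℕ)) = (((i.succAbove j):ℕ) + ((j.predAbove i):ℕ)) + 1 ∨
      (((i.succAbove j):ℕ) + ((j.predAbove i):ℕ)) = ((i:ℕ)+(j:ℕ)) + 1 := by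
    simp only [val_sA, val_pA]; split_ifs <;> omega
  rcases h with h | h <;> rw [h] <;> rw [pow_succ] <;> ring

lemma P_decomp (u : V4) : u = u 0 • e 0 + P u := by
  simp [P]

lemma PP (u : V4) : P (P u) = P u := by
  have h0 : P u 0 = 0 := by simp [P, e]
  conv_lhs => rw [show P (P u) = P u - P u 0 • e 0 from rfl]
  rw [h0, zero_smul, sub_zero]

lemma cancel {n : ℕ} (a : Fin (n+2) → ℝ) (b c : Fin (n+2) → V4)
    (Φ : Fin (n+2) → Fin (n+1) → V4 →L[ℝ] ℝ)
    (hΦ : ∀ i j, Φ (i.succAbove j) (j.predAbove i) = Φ i j)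
    (hb : ∀ i, b i = a i • e 0 + c i) :
    ∑ i : Fin (n+2), ∑ j : Fin (n+1), (-1:ℝ)^((i:ℕ)+(j:ℕ)) *
      (a (i.succAbove j) * Φ i j (b i) + a i * Φ i j (c (i.succAbove j))) = 0 := by
  rw [← Finset.sum_product']
  apply Finset.sum_ninvolution
    (g := fun q : Fin (n+2) × Fin (n+1) => (q.1.succAbove q.2, q.2.predAbove q.1))
  · rintro ⟨i, j⟩
    simp only
    rw [hΦ i j, F1 i j, F4 i j, hb i, hb (i.succAbove j)]
    simp only [map_add, map_smul, smul_eq_mul]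
    ring
  · rintro ⟨i, j⟩ - h
    exact Fin.succAbove_ne i j (congrArg Prod.fst h)
  · intro q; exact Finset.mem_univ _
  · rintro ⟨i, j⟩
    simp only [Prod.mk.injEq]
    exact ⟨F1 i j, F2 i j⟩

lemma perm_move {q : ℕ} (A : AlternatingMap ℝ V4 ℝ (Fin (q+1))) (g : Fin (q+1) → V4)
    (j : Fin (q+1)) :
    A (Function.update g j (e 0)) =
      (-1:ℝ)^(j:ℕ) * A (Fin.cons (e 0) (fun l => g (j.succAbove l))) := by
  have hc : Fin.cons (e 0) (fun l => g (j.succAbove l)) =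
      (Function.update g j (e 0)) ∘ (j.cycleRange).symm := by
    funext l
    refine Fin.cases ?_ ?_ l
    · rw [Fin.cons_zero, Function.comp_apply, Fin.cycleRange_symm_zero, Function.update_self]
    · intro l'
      rw [Fin.cons_succ, Function.comp_apply, Fin.cycleRange_symm_succ,
        Function.update_of_ne (Fin.succAbove_ne j l')]
  rw [hc, AlternatingMap.map_perm, Equiv.Perm.sign_symm, Fin.sign_cycleRange]
  rcases Nat.even_or_odd (j:ℕ) with h | h
  · simp [h.neg_one_pow, Even.neg_one_pow h]
  · simp [h.neg_one_pow, Odd.neg_one_pow h]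

lemma expand {q : ℕ} (A : AlternatingMap ℝ V4 ℝ (Fin (q+1))) (w : Fin (q+1) → V4) :
    A w = A (fun l => P (w l)) +
      ∑ j : Fin (q+1), (-1:ℝ)^(j:ℕ) * (w j 0) *
        A (Fin.cons (e 0) (fun l => P (w (j.succAbove l)))) := by
  classical
  have hw : w = (fun j => (w j 0) • e 0) + (fun j => P (w j)) := by
    funext j; exact P_decomp (w j)
  have key : ∀ s : Finset (Fin (q+1)),
      A (s.piecewise (fun j => (w j 0) • e 0) (fun j => P (w j))) =
        (∏ j ∈ s, w j 0) • A (s.piecewise (fun _ => e 0) (fun j => P (w j))) := by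
    intro s
    have h1 : s.piecewise (fun j => (w j 0) • e 0) (fun j => P (w j)) =
        s.piecewise (fun j => (w j 0) • (s.piecewise (fun _ => e 0) (fun j => P (w j))) j)
          (s.piecewise (fun _ => e 0) (fun j => P (w j))) := by
      funext j; by_cases h : j ∈ s <;> simp [Finset.piecewise, h]
    rw [h1]
    exact A.toMultilinearMap.map_piecewise_smul _ _ s
  have hzero : ∀ s : Finset (Fin (q+1)), 1 < s.card →
      A (s.piecewise (fun _ => e 0) (fun j => P (w j))) = 0 := by
    intro s hs
    obtain ⟨a, ha, b, hb, hab⟩ := Finset.one_lt_card.mp hs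
    exact A.map_eq_zero_of_eq _
      (by simp [Finset.piecewise_eq_of_mem _ _ _ ha, Finset.piecewise_eq_of_mem _ _ _ hb]) hab
  have hmain : A w = ∑ s : Finset (Fin (q+1)),
      (∏ j ∈ s, w j 0) • A (s.piecewise (fun _ => e 0) (fun j => P (w j))) := by
    conv_lhs => rw [hw]
    rw [show (A ((fun j => (w j 0) • e 0) + fun j => P (w j)) : ℝ)
        = A.toMultilinearMap ((fun j => (w j 0) • e 0) + fun j => P (w j)) from rfl,
      MultilinearMap.map_add_univ]
    exact Finset.sum_congr rfl fun s _ => key s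
  rw [hmain]
  set S0 : Finset (Finset (Fin (q+1))) :=
    insert ∅ (Finset.univ.image fun j => ({j} : Finset (Fin (q+1)))) with hS0
  have hrestrict : ∑ s : Finset (Fin (q+1)),
      (∏ j ∈ s, w j 0) • A (s.piecewise (fun _ => e 0) (fun j => P (w j))) =
      ∑ s ∈ S0, (∏ j ∈ s, w j 0) • A (s.piecewise (fun _ => e 0) (fun j => P (w j))) := by
    symm
    apply Finset.sum_subset (Finset.subset_univ _)
    intro s _ hs
    have hcard : 1 < s.card := by
      have h1 : s.card ≠ 0 := fun h => hs (by rw [hS0]; simp [Finset.card_eq_zero.mp h])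
      have h2 : s.card ≠ 1 := by
        intro h
        obtain ⟨a, rfl⟩ := Finset.card_eq_one.mp h
        apply hs; rw [hS0]
        simp only [Finset.mem_insert, Finset.mem_image, Finset.mem_univ, true_and]
        exact Or.inr ⟨a, rfl⟩
      omega
    rw [hzero s hcard, smul_zero]
  rw [hrestrict, hS0, Finset.sum_insert (by
      intro h; simp only [Finset.mem_image] at h
      obtain ⟨x, -, hx⟩ := h; exact Finset.singleton_ne_empty x hx),
    Finset.sum_image (fun a _ b _ h => Finset.singleton_injective h)]
  simp only [Finset.piecewise_empty, Finset.prod_empty, one_smul, Finset.prod_singleton,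
    Finset.piecewise_singleton]
  congr 1
  refine Finset.sum_congr rfl fun j _ => ?_
  rw [perm_move A (fun l => P (w l)) j, smul_eq_mul]
  ring

end ExtFrameAux

open ExtFrameAux

/-- for a smooth form ω on ℝ⁴ and the reference frame Γ = e₀, θ = dx⁰,
the exterior derivative decomposes as dω = θ ∧ (L_Γ ω_⊥ − d_⊥ i_Γ ω) + d_⊥ ω_⊥,
where ω_⊥(x)(v₁,…) = ω(x)(P v₁,…), (d_⊥η)(x)(v₀,…) = dη(x)(P v₀,…),
(i_Γω)(x)(v₁,…) = ω(x)(e₀, v₁,…), L_Γ ω_⊥ = ∂₀(ω_⊥), and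
(θ ∧ η)(v₀,…,v_p) = Σᵢ (−1)ⁱ θ(vᵢ) η(v₀,…,v̂ᵢ,…,v_p) with θ(v) = v₀. -/
theorem extDeriv_frame_decomposition
    (p : ℕ) (ω : V4 → AlternatingMap ℝ V4 ℝ (Fin (p + 1)))
    (hω : ∀ v : Fin (p + 1) → V4, ContDiff ℝ (⊤ : ℕ∞) fun x => ω x v)
    (x : V4) (v : Fin (p + 2) → V4) :
    extD (fun y w => ω y w) x v =
      (∑ i : Fin (p + 2), (-1 : ℝ) ^ (i : ℕ) * v i 0 *
        (fderiv ℝ (fun y => ω y (fun l => P (v (i.succAbove l)))) x (e 0)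
          - extD (fun y (u : Fin p → V4) => ω y (Fin.cons (e 0) u)) x
              (fun l => P (v (i.succAbove l)))))
        + extD (fun y (w : Fin (p + 1) → V4) => ω y (fun l => P (w l))) x
            (fun i => P (v i)) := by
  classical
  have hd : ∀ u : Fin (p+1) → V4, DifferentiableAt ℝ (fun y => ω y u) x :=
    fun u => ((hω u).differentiable (by simp)).differentiableAt
  -- shorthand (plain defs, no `set`, to keep syntactic control)
  let G : Fin (p+2) → V4 →L[ℝ] ℝ :=
    fun i => fderiv ℝ (fun y => ω y (fun l => P (v (i.succAbove l)))) x
  let F : Fin (p+2) → Fin (p+1) → V4 →L[ℝ] ℝ :=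
    fun i j => fderiv ℝ
      (fun y => ω y (Fin.cons (e 0) (fun l => P (v (i.succAbove (j.succAbove l)))))) x
  have hfder : ∀ i : Fin (p+2),
      fderiv ℝ (fun y => ω y (fun j => v (i.succAbove j))) x
        = G i + ∑ j : Fin (p+1), ((-1:ℝ)^(j:ℕ) * (v (i.succAbove j) 0)) • F i j := by
    intro i
    have hfun : (fun y => ω y (fun j => v (i.succAbove j)))
        = fun y => ω y (fun l => P (v (i.succAbove l))) +
            ∑ j : Fin (p+1), (-1:ℝ)^(j:ℕ) * (v (i.succAbove j) 0) *
              ω y (Fin.cons (e 0) (fun l => P (v (i.succAbove (j.succAbove l))))) := by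
      funext y; exact expand (ω y) _
    rw [hfun, fderiv_fun_add (hd _) (by
      exact DifferentiableAt.fun_sum fun j _ => ((hd _).const_mul _))]
    congr 1
    rw [fderiv_fun_sum fun j _ => ((hd _).const_mul _)]
    refine Finset.sum_congr rfl fun j _ => ?_
    rw [fderiv_const_mul (hd _)]
  -- the cancellation sum
  have key : ∑ i : Fin (p+2), ∑ j : Fin (p+1), (-1:ℝ)^((i:ℕ)+(j:ℕ)) *
      ((v (i.succAbove j) 0) * F i j (v i)
        + (v i 0) * F i j (P (v (i.succAbove j)))) = 0 :=
    cancel (fun i => v i 0) v (fun i => P (v i)) F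
      (fun i j => by
        show fderiv ℝ (fun y => ω y (Fin.cons (e 0) (fun l =>
            P (v ((i.succAbove j).succAbove ((j.predAbove i).succAbove l)))))) x
          = fderiv ℝ (fun y => ω y (Fin.cons (e 0) (fun l =>
              P (v (i.succAbove (j.succAbove l)))))) x
        simp only [← F3])
      (fun i => P_decomp (v i))
  -- unfold extD everywhere
  simp only [extD]
  -- rewrite the LHS using hfder, and the last RHS sum using PP
  have hPP : (fun l => P (P (v l))) = fun l => P (v l) := funext fun l => PP (v l)
  calc
    ∑ i : Fin (p+2), (-1:ℝ)^(i:ℕ) *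
        (fderiv ℝ (fun y => ω y (fun j => v (i.succAbove j))) x) (v i)
      = ∑ i : Fin (p+2), ((-1:ℝ)^(i:ℕ) * (v i 0) * (G i (e 0)
            - ∑ j : Fin (p+1), (-1:ℝ)^(j:ℕ) * (F i j (P (v (i.succAbove j)))))
          + (-1:ℝ)^(i:ℕ) * (G i (P (v i)))
          + ∑ j : Fin (p+1), (-1:ℝ)^((i:ℕ)+(j:ℕ)) *
              ((v (i.succAbove j) 0) * F i j (v i)
                + (v i 0) * F i j (P (v (i.succAbove j))))) := by
        refine Finset.sum_congr rfl fun i _ => ?_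
        rw [hfder i]
        have hGi : G i (v i) = (v i 0) * G i (e 0) + G i (P (v i)) := by
          conv_lhs => rw [P_decomp (v i)]
          rw [map_add, map_smul, smul_eq_mul]
        simp only [ContinuousLinearMap.add_apply, ContinuousLinearMap.coe_sum',
          Finset.sum_apply, ContinuousLinearMap.coe_smul', Pi.smul_apply, smul_eq_mul]
        rw [hGi]
        have hsum : ∑ j : Fin (p+1),
            (-1:ℝ)^((i:ℕ)+(j:ℕ)) * ((v (i.succAbove j) 0) * F i j (v i)
              + (v i 0) * F i j (P (v (i.succAbove j))))
          = (-1:ℝ)^(i:ℕ) *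
              (∑ j : Fin (p+1), (-1:ℝ)^(j:ℕ) * v (i.succAbove j) 0 * F i j (v i))
            + (-1:ℝ)^(i:ℕ) * (v i 0) *
              (∑ j : Fin (p+1), (-1:ℝ)^(j:ℕ) * F i j (P (v (i.succAbove j)))) := by
          rw [Finset.mul_sum, Finset.mul_sum, ← Finset.sum_add_distrib]
          refine Finset.sum_congr rfl fun j _ => ?_
          rw [pow_add]; ring
        rw [hsum]; ring
    _ = ∑ i : Fin (p+2), ((-1:ℝ)^(i:ℕ) * (v i 0) * (G i (e 0)
            - ∑ j : Fin (p+1), (-1:ℝ)^(j:ℕ) * (F i j (P (v (i.succAbove j)))))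
          + (-1:ℝ)^(i:ℕ) * (G i (P (v i)))) := by
        rw [Finset.sum_add_distrib, key, add_zero]
    _ = (∑ i : Fin (p+2), (-1:ℝ)^(i:ℕ) * (v i 0) *
          (G i (e 0)
            - ∑ j : Fin (p+1), (-1:ℝ)^(j:ℕ) *
              (fderiv ℝ (fun y => ω y (Fin.cons (e 0)
                (fun l => P (v (i.succAbove (j.succAbove l)))))) x) (P (v (i.succAbove j)))))
        + ∑ i : Fin (p+2), (-1:ℝ)^(i:ℕ) *
            (fderiv ℝ (fun y => ω y (fun l => P (P (v (i.succAbove l))))) x) (P (v i)) := by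
        rw [Finset.sum_add_distrib]
        congr 1
        refine Finset.sum_congr rfl fun i _ => ?_
        show _ = (-1:ℝ)^(i:ℕ) * (fderiv ℝ (fun y => ω y (fun l => P (P (v (i.succAbove l))))) x) (P (v i))
        have : (fun l => P (P (v (i.succAbove l)))) = fun l => P (v (i.succAbove l)) :=
          funext fun l => PP (v (i.succAbove l))
        rw [this]
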